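/- arXiv:2309.03077 — 2 statements merged into one kernel-verified Lean document; each statement's English description precedes it below -/
import Mathlib

section
/- Let R be a commutative ring, n a natural number, E the exterior algebra of Fin n → R with ordered basis products v_I, and suppose hB is an R-basis of E indexed by Finset (Fin n) with hB(I) = v_I for every I. Let π : E → R be the coordinate functional of hB at the index univ. Then for all families of coefficients α, β : Finset (Fin n) → R, π( reverse(Σ_I α_I • v_I) · (Σ_J β_J • v_J) ) = Σ_I (−1)^(Σ_{i ∈ I} i) · α_I · β_{Iᶜ}. -/
open CliffordAlgebra

/-- The ordered basis product `v_I` in the exterior algebra of `Fin n → R`, realized as the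
Clifford algebra of the zero quadratic form: the product, in increasing order of indices,
of the generators `ι (Pi.single i 1)` for `i ∈ I`. -/
noncomputable def vI {R : Type*} [CommRing R] {n : ℕ} (I : Finset (Fin n)) :
    CliffordAlgebra (0 : QuadraticForm R (Fin n → R)) :=
  ((I.sort (· ≤ ·)).map fun i =>
    CliffordAlgebra.ι (0 : QuadraticForm R (Fin n → R)) (Pi.single i (1 : R))).prod

/-!
Write `v_I = e_a v_{I \ a}` with `a = min I`. Since the generators anticommute and square to
zero, induction on `I` shows that `v_I v_J` vanishes unless `I` and `J` are disjoint, in which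
case it is a multiple of `v_{I ∪ J}`, and that `reverse v_I = ± v_I`. So only `J = Iᶜ`
contributes to the top coordinate, and there `e_a` passes exactly the `a` elements of `Iᶜ`
below `a`, giving `reverse (v_I) v_{Iᶜ} = (-1) ^ (∑ i ∈ I, i) v_univ`.
-/

open Finset

section BasisProducts

variable {R : Type*} [CommRing R] {n : ℕ}

variable (R) in
noncomputable abbrev gen (i : Fin n) : CliffordAlgebra (0 : QuadraticForm R (Fin n → R)) :=
  ι 0 (Pi.single i 1)

theorem gen_mul_self (i : Fin n) : gen R i * gen R i = 0 :=
  ExteriorAlgebra.ι_sq_zero _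

theorem vI_empty : vI (∅ : Finset (Fin n)) = (1 : CliffordAlgebra (0 : QuadraticForm R _)) := by
  simp [vI]

theorem vI_insert_of_forall_lt {i : Fin n} {I : Finset (Fin n)} (h : ∀ j ∈ I, i < j) :
    vI (insert i I) = gen R i * vI I := by
  have hi : i ∉ I := fun hi => lt_irrefl i (h i hi)
  simp [vI, sort_insert _ (fun j hj => (h j hj).le) hi]

theorem vI_mul_gen (I : Finset (Fin n)) (i : Fin n) :
    vI I * gen R i = (-1 : R) ^ #I • (gen R i * vI I) := by
  induction I using Finset.induction_on_min with
  | empty => simp [vI_empty]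
  | insert a s ha ih =>
    have has : a ∉ s := fun h => lt_irrefl a (ha a h)
    rw [vI_insert_of_forall_lt ha, mul_assoc, ih, mul_smul_comm,
      ι_mul_ι_mul_of_isOrtho _ (.all _ _), card_insert_of_notMem has, pow_succ, mul_neg_one,
      neg_smul, smul_neg]

theorem gen_mul_vI_of_mem {i : Fin n} {I : Finset (Fin n)} (hi : i ∈ I) :
    gen R i * vI I = 0 := by
  induction I using Finset.induction_on_min with
  | empty => simp at hi
  | insert a s ha ih =>
    rw [vI_insert_of_forall_lt ha]
    obtain rfl | his := mem_insert.1 hi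
    · rw [← mul_assoc, gen_mul_self, zero_mul]
    · rw [ι_mul_ι_mul_of_isOrtho _ (.all _ _), ih his, mul_zero, neg_zero]

theorem gen_mul_vI {i : Fin n} {I : Finset (Fin n)} (hi : i ∉ I) :
    gen R i * vI I = (-1 : R) ^ #{j ∈ I | j < i} • vI (insert i I) := by
  induction I using Finset.induction_on_min with
  | empty => simp [vI]
  | insert a s ha ih =>
    obtain ⟨hia, his⟩ : i ≠ a ∧ i ∉ s := by simpa using hi
    rcases hia.lt_or_gt with hia | hai
    · have hlt : ∀ j ∈ insert a s, i < j := by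
        simpa [forall_mem_insert] using ⟨hia, fun j hj => hia.trans (ha j hj)⟩
      rw [← vI_insert_of_forall_lt hlt, filter_false_of_mem (fun j hj => (hlt j hj).asymm),
        card_empty, pow_zero, one_smul]
    · have hlt : ∀ j ∈ insert i s, a < j := by
        simpa [forall_mem_insert] using ⟨hai, ha⟩
      have hcard : #{j ∈ insert a s | j < i} = #{j ∈ s | j < i} + 1 := by
        rw [filter_insert, if_pos hai, card_insert_of_notMem
          fun h => lt_irrefl a (ha a (mem_filter.1 h).1)]
      rw [vI_insert_of_forall_lt ha, ι_mul_ι_mul_of_isOrtho _ (.all _ _), ih his,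
        mul_smul_comm, ← vI_insert_of_forall_lt hlt, insert_comm, hcard, pow_succ, mul_neg_one,
        neg_smul]

theorem exists_vI_mul_vI (I J : Finset (Fin n)) :
    ∃ c : R, vI I * vI J =
      if Disjoint I J then c • vI (I ∪ J) else (0 : CliffordAlgebra (0 : QuadraticForm R _)) := by
  induction I using Finset.induction_on_min with
  | empty => exact ⟨1, by simp [vI_empty]⟩
  | insert a s ha ih =>
    obtain ⟨c, hc⟩ := ih
    have has : a ∉ s := fun h => lt_irrefl a (ha a h)
    rw [vI_insert_of_forall_lt ha, mul_assoc, hc]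
    by_cases haJ : a ∈ J
    · refine ⟨0, ?_⟩
      rw [if_neg (fun h => disjoint_left.1 h (mem_insert_self a s) haJ)]
      split_ifs
      · rw [mul_smul_comm, gen_mul_vI_of_mem (mem_union_right _ haJ), smul_zero]
      · rw [mul_zero]
    · by_cases hsJ : Disjoint s J
      · refine ⟨c * (-1) ^ #{j ∈ s ∪ J | j < a}, ?_⟩
        rw [if_pos hsJ, if_pos (disjoint_insert_left.2 ⟨haJ, hsJ⟩), mul_smul_comm,
          gen_mul_vI (by simp [has, haJ]), smul_smul, insert_union]
      · refine ⟨0, ?_⟩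
        rw [if_neg hsJ, if_neg (fun h => hsJ (disjoint_of_subset_left (subset_insert _ _) h)),
          mul_zero]

theorem reverse_vI (I : Finset (Fin n)) :
    reverse (vI I : CliffordAlgebra (0 : QuadraticForm R (Fin n → R))) =
      (-1 : R) ^ (#I).choose 2 • vI I := by
  induction I using Finset.induction_on_min with
  | empty => simp [vI_empty]
  | insert a s ha ih =>
    have has : a ∉ s := fun h => lt_irrefl a (ha a h)
    rw [vI_insert_of_forall_lt ha, reverse.map_mul, reverse_ι, ih, smul_mul_assoc, vI_mul_gen,
      smul_smul, ← pow_add, card_insert_of_notMem has, Nat.choose_succ_succ', Nat.choose_one_right,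
      add_comm]

theorem reverse_vI_mul_vI_compl (I : Finset (Fin n)) :
    reverse (vI I) * vI Iᶜ =
      (-1 : R) ^ (∑ i ∈ I, (i : ℕ)) • (vI univ : CliffordAlgebra (0 : QuadraticForm R _)) := by
  induction I using Finset.induction_on_min with
  | empty => simp [vI_empty]
  | insert a s ha ih =>
    have has : a ∉ s := fun h => lt_irrefl a (ha a h)
    have hbelow : #{j ∈ (insert a s)ᶜ | j < a} = a := by
      rw [show {j ∈ (insert a s)ᶜ | j < a} = Iio a from ?_, Fin.card_Iio]
      ext j
      simp only [mem_filter, mem_compl, mem_insert, mem_Iio, not_or, and_iff_right_iff_imp]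
      exact fun hj => ⟨hj.ne, fun h => (ha j h).asymm hj⟩
    rw [vI_insert_of_forall_lt ha, reverse.map_mul, reverse_ι, mul_assoc, gen_mul_vI (by simp),
      hbelow, mul_smul_comm, insert_compl_insert has, ih, smul_smul, ← pow_add, sum_insert has,
      add_comm]

theorem coord_vI
    (hB : Module.Basis (Finset (Fin n)) R (CliffordAlgebra (0 : QuadraticForm R (Fin n → R))))
    (hBv : ∀ I : Finset (Fin n), hB I = vI I) (K L : Finset (Fin n)) :
    hB.coord L (vI K) = if K = L then 1 else 0 := by
  rw [← hBv, Module.Basis.coord_apply, Module.Basis.repr_self, Finsupp.single_apply]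

theorem coord_univ_reverse_vI_mul_vI
    (hB : Module.Basis (Finset (Fin n)) R (CliffordAlgebra (0 : QuadraticForm R (Fin n → R))))
    (hBv : ∀ I : Finset (Fin n), hB I = vI I) (I J : Finset (Fin n)) :
    hB.coord univ (reverse (vI I) * vI J) =
      if J = Iᶜ then (-1 : R) ^ (∑ i ∈ I, (i : ℕ)) else 0 := by
  split_ifs with hJ
  · rw [hJ, reverse_vI_mul_vI_compl, map_smul, coord_vI hB hBv, if_pos rfl, smul_eq_mul, mul_one]
  · obtain ⟨c, hc⟩ := exists_vI_mul_vI (R := R) I J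
    rw [reverse_vI, smul_mul_assoc, hc, map_smul]
    split_ifs with hd
    · have hunion : I ∪ J ≠ univ := fun h =>
        hJ (IsCompl.compl_eq ⟨hd, codisjoint_iff.2 h⟩).symm
      rw [map_smul, coord_vI hB hBv, if_neg hunion, smul_zero, smul_zero]
    · rw [map_zero, smul_zero]

end BasisProducts

theorem coord_reverse_mul {R : Type*} [CommRing R] {n : ℕ}
    (hB : Module.Basis (Finset (Fin n)) R (CliffordAlgebra (0 : QuadraticForm R (Fin n → R))))
    (hBv : ∀ I : Finset (Fin n), hB I = vI I)
    (α β : Finset (Fin n) → R) :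
    hB.coord Finset.univ
      (reverse (∑ I : Finset (Fin n), α I • vI I) * ∑ J : Finset (Fin n), β J • vI J) =
      ∑ I : Finset (Fin n), (-1 : R) ^ (∑ i ∈ I, (i : ℕ)) * α I * β Iᶜ := by
  simp only [map_sum, map_smul, sum_mul_sum, smul_mul_smul_comm, smul_eq_mul,
    coord_univ_reverse_vI_mul_vI hB hBv, mul_ite, mul_zero, sum_ite_eq', mem_univ, if_true]
  exact sum_congr rfl fun I _ => by ring
end

section
/- Let R be a commutative ring and n a natural number, and assume either n ≡ 0 or 1 (mod 4), or 2 = 0 in R. On M = Finset (Fin n) → R define B(α, β) = Σ_{I ⊆ Fin n} (−1)^(Σ_{i ∈ I} i) · α(I) · β(Iᶜ) and q(α) = Σ_{I ⊆ Fin n, 0 ∈ I} (−1)^(Σ_{i ∈ I} i) · α(I) · α(Iᶜ). Then B is the polar form of q: for all α, β, q(α + β) − q(α) − q(β) = B(α, β). -/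
/-- The coordinate expression of the bilinear form `b_∧(x, y) = π(x̄ ∧ y)` on the exterior
algebra `∧(R^n)` in the basis `{v_I}`. -/
def Bwedge {R : Type*} [CommRing R] {n : ℕ} (α β : Finset (Fin n) → R) : R :=
  ∑ I : Finset (Fin n), (-1 : R) ^ (∑ i ∈ I, (i : ℕ)) * α I * β Iᶜ

/-- The coordinate expression of the quadratic form `q_∧` on the exterior algebra `∧(R^n)`
in the basis `{v_I}` (with `0` playing the role of the index `1` of 1-indexed notation). -/
def qwedge {R : Type*} [CommRing R] {n : ℕ} [NeZero n] (α : Finset (Fin n) → R) : R :=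
  ∑ I ∈ Finset.univ.filter (fun I : Finset (Fin n) => (0 : Fin n) ∈ I),
    (-1 : R) ^ (∑ i ∈ I, (i : ℕ)) * α I * α Iᶜ

lemma even_range_sum {n : ℕ} (hn : n % 4 = 0 ∨ n % 4 = 1) :
    Even (∑ i ∈ Finset.range n, i) := by
  have h2 := Finset.sum_range_id_mul_two n
  rcases hn with hn | hn
  · obtain ⟨k, rfl⟩ : ∃ k, n = 4 * k := ⟨n / 4, by omega⟩
    have hm : (4 * k) * (4 * k - 1) = 4 * (k * (4 * k - 1)) := by
      generalize (4 * k - 1) = m; ring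
    rw [hm] at h2
    exact ⟨k * (4 * k - 1), by omega⟩
  · obtain ⟨k, rfl⟩ : ∃ k, n = 4 * k + 1 := ⟨n / 4, by omega⟩
    have hm : (4 * k + 1) * (4 * k + 1 - 1) = 4 * (k * (4 * k + 1)) := by
      simp only [Nat.add_sub_cancel]; ring
    rw [hm] at h2
    exact ⟨k * (4 * k + 1), by omega⟩

lemma sign_compl {R : Type*} [CommRing R] {n : ℕ}
    (h : (n % 4 = 0 ∨ n % 4 = 1) ∨ (2 : R) = 0) (I : Finset (Fin n)) :
    (-1 : R) ^ (∑ i ∈ Iᶜ, (i : ℕ)) = (-1 : R) ^ (∑ i ∈ I, (i : ℕ)) := by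
  rcases h with hn | h2
  · set a := ∑ i ∈ I, (i : ℕ)
    set b := ∑ i ∈ Iᶜ, (i : ℕ)
    have total : a + b = ∑ i : Fin n, (i : ℕ) := Finset.sum_add_sum_compl I _
    have heven : Even (a + b) := by
      rw [total, Fin.sum_univ_eq_sum_range (fun i => i) n]
      exact even_range_sum hn
    have h1 : (-1 : R) ^ a * (-1 : R) ^ b = 1 := by
      rw [← pow_add]; exact heven.neg_one_pow
    have haa : (-1 : R) ^ a * (-1 : R) ^ a = 1 := by
      rw [← pow_add]; exact Even.neg_one_pow (Even.add_self a)
    calc (-1 : R) ^ b = ((-1) ^ a * (-1) ^ a) * (-1) ^ b := by rw [haa, one_mul]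
      _ = (-1) ^ a * ((-1) ^ a * (-1) ^ b) := by ring
      _ = (-1) ^ a := by rw [h1, mul_one]
  · have : (-1 : R) = 1 := by linear_combination -h2
    rw [this, one_pow, one_pow]

theorem Bwedge_polar_qwedge {R : Type*} [CommRing R] {n : ℕ} [NeZero n]
    (h : (n % 4 = 0 ∨ n % 4 = 1) ∨ (2 : R) = 0)
    (α β : Finset (Fin n) → R) :
    qwedge (α + β) - qwedge α - qwedge β = Bwedge α β := by
  unfold qwedge Bwedge
  rw [← Finset.sum_filter_add_sum_filter_not Finset.univ
    (fun I : Finset (Fin n) => (0 : Fin n) ∈ I)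
    (fun I => (-1 : R) ^ (∑ i ∈ I, (i : ℕ)) * α I * β Iᶜ)]
  have hre : ∑ I ∈ Finset.univ.filter (fun I : Finset (Fin n) => ¬ (0 : Fin n) ∈ I),
      (-1 : R) ^ (∑ i ∈ I, (i : ℕ)) * α I * β Iᶜ
      = ∑ I ∈ Finset.univ.filter (fun I : Finset (Fin n) => (0 : Fin n) ∈ I),
      (-1 : R) ^ (∑ i ∈ I, (i : ℕ)) * α Iᶜ * β I := by
    refine Finset.sum_nbij' (fun I => Iᶜ) (fun I => Iᶜ) ?_ ?_ ?_ ?_ ?_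
    · intro a ha; simp_all
    · intro a ha; simp_all
    · intro a _; simp
    · intro a _; simp
    · intro a _
      rw [sign_compl h, compl_compl]
  rw [hre, ← Finset.sum_sub_distrib, ← Finset.sum_sub_distrib, ← Finset.sum_add_distrib]
  refine Finset.sum_congr rfl fun I _ => ?_
  simp only [Pi.add_apply]
  ring
end
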